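/- arXiv:1806.04843 — 7 statements merged into one kernel-verified Lean document; each statement's English description precedes it below -/
import Mathlib

section
/- If μ is a non-atomic Borel measure on a metric space X that is expansive with respect to a time varying bi-measurable map F, and h : X → Y is a uniform equivalence conjugating F to a time varying bi-measurable map G on Y (i.e., h ∘ fₙ = gₙ ∘ h for all n), then μ (pushed forward along h, or equivalently the measure y ↦ μ(h⁻¹(·))) is expansive with respect to G; in particular, expansiveness of a measure is invariant under uniform conjugacy. -/
open MeasureTheory Metric Set Filter

variable {X : Type*}

/-- Forward compositions `F_n = f_n ∘ ⋯ ∘ f_1 ∘ f_0` for `n ≥ 0`. -/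
def compF (f : ℕ → X ≃ X) : ℕ → X → X
  | 0 => f 0
  | n + 1 => (f (n + 1)) ∘ compF f n

/-- Backward compositions `F_{-n} = f_n⁻¹ ∘ ⋯ ∘ f_1⁻¹ ∘ f_0⁻¹`. -/
def compB (f : ℕ → X ≃ X) : ℕ → X → X
  | 0 => (f 0).symm
  | n + 1 => ((f (n + 1)).symm : X → X) ∘ compB f n

/-- The time-`n` map `F_n` for `n : ℤ`. -/
def compZ (f : ℕ → X ≃ X) : ℤ → X → X
  | Int.ofNat n => compF f n
  | Int.negSucc n => compB f (n + 1)

/-- `F_{[a, a+r]} = f_{a+r} ∘ ⋯ ∘ f_a` as an equivalence. -/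
def seg (f : ℕ → X ≃ X) (a : ℕ) : ℕ → X ≃ X
  | 0 => f a
  | r + 1 => (seg f a r).trans (f (a + r + 1))

/-- `F⁻¹_{[a, a+r]} = f_{a+r}⁻¹ ∘ ⋯ ∘ f_a⁻¹` as an equivalence. -/
def segInv (f : ℕ → X ≃ X) (a : ℕ) : ℕ → X ≃ X
  | 0 => (f a).symm
  | r + 1 => (segInv f a r).trans (f (a + r + 1)).symm

/-- A time varying bi-measurable map: each `f n` and its inverse are measurable, `f 0 = id`. -/
def BiMeasurable [MeasurableSpace X] (f : ℕ → X ≃ X) : Prop :=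
  (∀ n, Measurable (f n)) ∧ (∀ n, Measurable ((f n).symm : X → X)) ∧ f 0 = Equiv.refl X

/-- The dynamical ball `Γ_δ(x)`. -/
def Gamma [PseudoMetricSpace X] (f : ℕ → X ≃ X) (δ : ℝ) (x : X) : Set X :=
  {y | ∀ n : ℤ, dist (compZ f n x) (compZ f n y) ≤ δ}

/-- `μ` is expansive w.r.t. `F`. -/
def IsExpansiveMeasure [PseudoMetricSpace X] [MeasurableSpace X] (μ : Measure X)
    (f : ℕ → X ≃ X) : Prop :=
  ∃ δ > 0, ∀ x : X, μ (Gamma f δ x) = 0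

/-- `η(f,g) = sup_x min(d(f x, g x), 1)`. -/
noncomputable def eta [PseudoMetricSpace X] (f g : X → X) : ℝ :=
  ⨆ x, min (dist (f x) (g x)) 1

/-- The metric `p` on time varying maps. -/
noncomputable def pDist [PseudoMetricSpace X] (f g : ℕ → X ≃ X) : ℝ :=
  max (⨆ n, eta (f n) (g n)) (⨆ n, eta ((f n).symm) ((g n).symm))

/-- The `k`-th power system `F^k`, with `g_n = F_{[(n-1)k+1, nk]}`. -/
def powerF (f : ℕ → X ≃ X) (k : ℕ) : ℕ → X ≃ X
  | 0 => Equiv.refl X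
  | n + 1 => seg f (n * k + 1) (k - 1)

/-- Upper semicontinuity of a set valued map at the points of its domain. -/
def USCSetMap [PseudoMetricSpace X] (H : X → Set X) : Prop :=
  ∀ x : X, (H x).Nonempty → ∀ O : Set X, IsOpen O → H x ⊆ O →
    ∃ δ > 0, ∀ y : X, dist x y < δ → H y ⊆ O

/-- `μ` is topologically stable w.r.t. `F`. -/
def TopStableMeasure [MetricSpace X] [MeasurableSpace X] (μ : Measure X)
    (f : ℕ → X ≃ X) : Prop :=
  ∀ ε > 0, ∃ δ : ℝ, 0 < δ ∧ δ < 1 ∧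
    ∀ g : ℕ → X ≃ X, BiMeasurable g → pDist f g < δ →
      ∃ H : X → Set X,
        (∀ x, IsCompact (H x)) ∧ USCSetMap H ∧
        MeasurableSet {x : X | (H x).Nonempty} ∧
        μ {x : X | ¬ (H x).Nonempty} = 0 ∧
        (∀ x, μ (H x) = 0) ∧
        (∀ x, H x ⊆ ball x ε) ∧
        (∀ x, ∀ n : ℤ, compZ f n '' H x ⊆ closedBall (compZ g n x) ε)

/-- `F` is topologically stable. -/
def TopStableMap [MetricSpace X] [MeasurableSpace X] (f : ℕ → X ≃ X) : Prop :=
  ∀ ε > 0, ∃ δ : ℝ, 0 < δ ∧ δ < 1 ∧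
    ∀ g : ℕ → X ≃ X, BiMeasurable g → pDist f g < δ →
      ∃ h : X → X, Continuous h ∧
        ∀ x, dist (h x) x < ε ∧ ∀ n : ℤ, dist (compZ f n (h x)) (compZ g n x) < ε

/-- `μ` is persistent w.r.t. `F`. -/
def MeasurePersistent [MetricSpace X] [MeasurableSpace X] (μ : Measure X)
    (f : ℕ → X ≃ X) : Prop :=
  ∀ ε > 0, ∃ δ : ℝ, 0 < δ ∧ δ < 1 ∧ ∃ B : Set X, MeasurableSet B ∧ μ (Set.univ \ B) = 0 ∧
    ∀ g : ℕ → X ≃ X, BiMeasurable g → pDist f g < δ →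
      ∀ x ∈ B, ∃ y : X, ∀ n : ℤ, dist (compZ f n y) (compZ g n x) < ε

/-- A `δ`-pseudo orbit of `F`. -/
def IsPseudoOrbit [PseudoMetricSpace X] (f : ℕ → X ≃ X) (δ : ℝ) (x : ℤ → X) : Prop :=
  (∀ n : ℕ, dist (f (n + 1) (x n)) (x (n + 1)) < δ) ∧
  (∀ n : ℕ, dist ((f (n + 1)).symm (x (-(n : ℤ)))) (x (-(n : ℤ) - 1)) < δ)

/-- `μ` has shadowing w.r.t. `F`. -/
def MeasureShadowing [PseudoMetricSpace X] [MeasurableSpace X] (μ : Measure X)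
    (f : ℕ → X ≃ X) : Prop :=
  ∀ ε > 0, ∃ δ > 0, ∃ B : Set X, MeasurableSet B ∧ μ (Set.univ \ B) = 0 ∧
    ∀ x : ℤ → X, IsPseudoOrbit f δ x → x 0 ∈ B →
      ∃ y : X, ∀ n : ℤ, dist (compZ f n y) (x n) < ε

/-- The ω-limit set of `x` under `F`. -/
def omegaLimitSet [PseudoMetricSpace X] (f : ℕ → X ≃ X) (x : X) : Set X :=
  {y | ∃ φ : ℕ → ℤ, StrictMono φ ∧
    Filter.Tendsto (fun k => dist (compZ f (φ k) x) y) Filter.atTop (nhds 0)}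

/-- The α-limit set of `x` under `F`. -/
def alphaLimitSet [PseudoMetricSpace X] (f : ℕ → X ≃ X) (x : X) : Set X :=
  {y | ∃ φ : ℕ → ℤ, StrictAnti φ ∧
    Filter.Tendsto (fun k => dist (compZ f (φ k) x) y) Filter.atTop (nhds 0)}

/-- `A(F)`: points with converging semiorbits. -/
def ConvSemiorbits [PseudoMetricSpace X] (f : ℕ → X ≃ X) : Set X :=
  {x | (∃ a, alphaLimitSet f x = {a}) ∧ (∃ b, omegaLimitSet f x = {b})}

/-- The set `A(x, y, n, m)`. -/
def ApproxSet [PseudoMetricSpace X] (f : ℕ → X ≃ X) (x y : X) (n m : ℕ) : Set X :=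
  {z | ∀ i : ℕ, m ≤ i →
    max (dist (compZ f (-(i : ℤ)) z) x) (dist (compZ f (i : ℤ) z) y) ≤ 1 / (n : ℝ)}

/-- The non-wandering set `Ω(F)`. -/
def NonWandering [TopologicalSpace X] (f : ℕ → X ≃ X) : Set X :=
  {x | ∀ U : Set X, IsOpen U → x ∈ U → ∀ n : ℕ, ∃ m : ℕ, n ≤ m ∧ ∃ r : ℕ,
    (((seg f m r : X → X) '' U) ∩ U).Nonempty ∨
      (((segInv f m r : X → X) '' U) ∩ U).Nonempty}

/-- A finite open cover `A` is a `μ`-generator for `F`. -/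
def IsMuGenerator [MetricSpace X] [MeasurableSpace X] (μ : Measure X) (f : ℕ → X ≃ X)
    (A : Finset (Set X)) : Prop :=
  (∀ U ∈ A, IsOpen U) ∧ (⋃ U ∈ A, U) = Set.univ ∧
    ∀ B : ℤ → Set X, (∀ n, B n ∈ A) → μ (⋂ n : ℤ, compZ f n '' closure (B n)) = 0


theorem expansive_measure_uniform_conjugacy_invariant
    {Y : Type*} [MetricSpace X] [MetricSpace Y]
    [MeasurableSpace X] [BorelSpace X] [MeasurableSpace Y] [BorelSpace Y]
    (f : ℕ → X ≃ X) (g : ℕ → Y ≃ Y)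
    (hf : BiMeasurable f) (hg : BiMeasurable g)
    (h : X ≃ Y) (hUC : UniformContinuous (h : X → Y))
    (hUC' : UniformContinuous (h.symm : Y → X))
    (hconj : ∀ n : ℕ, (h : X → Y) ∘ (f n) = (g n) ∘ (h : X → Y))
    (μ : Measure X) [NullSingletonClass μ]
    (hexp : IsExpansiveMeasure μ f) :
    IsExpansiveMeasure (Measure.map (h : X → Y) μ) g := by
  obtain ⟨δ, hδ, hGam⟩ := hexp
  obtain ⟨ε, hε, hεδ⟩ := Metric.uniformContinuous_iff.mp hUC' δ hδ
  -- conjugacy for inverses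
  have hsymm : ∀ n : ℕ, ∀ x : X, (h : X → Y) ((f n).symm x) = (g n).symm (h x) := by
    intro n x
    apply (g n).injective
    rw [Equiv.apply_symm_apply]
    have := congrFun (hconj n) ((f n).symm x)
    simpa using this.symm
  -- conjugacy for all time maps
  have hF : ∀ n : ℕ, ∀ x, (h : X → Y) (compF f n x) = compF g n (h x) := by
    intro n
    induction n with
    | zero => intro x; exact congrFun (hconj 0) x
    | succ n ih =>
      intro x
      show (h : X → Y) (f (n + 1) (compF f n x)) = g (n + 1) (compF g n (h x))
      have := congrFun (hconj (n + 1)) (compF f n x)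
      simp only [Function.comp_apply] at this
      rw [this, ih x]
  have hB : ∀ n : ℕ, ∀ x, (h : X → Y) (compB f n x) = compB g n (h x) := by
    intro n
    induction n with
    | zero => intro x; exact hsymm 0 x
    | succ n ih =>
      intro x
      show (h : X → Y) ((f (n + 1)).symm (compB f n x))
        = (g (n + 1)).symm (compB g n (h x))
      rw [hsymm (n + 1) (compB f n x), ih x]
  have hcomm : ∀ n : ℤ, ∀ x : X, (h : X → Y) (compZ f n x) = compZ g n (h x) := by
    intro n x
    cases n with
    | ofNat k => exact hF k x
    | negSucc k => exact hB (k + 1) x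
  -- measurability of compZ g
  have hmF : ∀ n, Measurable (compF g n) := by
    intro n
    induction n with
    | zero => exact hg.1 0
    | succ n ih => exact (hg.1 (n + 1)).comp ih
  have hmB : ∀ n, Measurable (compB g n) := by
    intro n
    induction n with
    | zero => exact hg.2.1 0
    | succ n ih => exact (hg.2.1 (n + 1)).comp ih
  have hmZ : ∀ n : ℤ, Measurable (compZ g n) := by
    intro n
    cases n with
    | ofNat k => exact hmF k
    | negSucc k => exact hmB (k + 1)
  refine ⟨ε / 2, by positivity, fun y => ?_⟩
  have hmeas : MeasurableSet (Gamma g (ε / 2) y) := by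
    have : Gamma g (ε / 2) y
        = ⋂ n : ℤ, (compZ g n) ⁻¹' (Metric.closedBall (compZ g n y) (ε / 2)) := by
      ext z
      simp [Gamma, Metric.mem_closedBall, dist_comm]
    rw [this]
    exact MeasurableSet.iInter fun n =>
      (hmZ n) (measurableSet_closedBall)
  rw [Measure.map_apply hUC.continuous.measurable hmeas]
  refine measure_mono_null ?_ (hGam (h.symm y))
  intro z hz n
  have h1 : dist (compZ g n y) (compZ g n (h z)) ≤ ε / 2 := hz n
  have h2 : dist (compZ g n y) (compZ g n (h z)) < ε := lt_of_le_of_lt h1 (by linarith)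
  have h3 := hεδ h2
  have e1 : (h.symm : Y → X) (compZ g n y) = compZ f n (h.symm y) := by
    have e := hcomm n (h.symm y)
    rw [Equiv.apply_symm_apply] at e
    rw [← e, Equiv.symm_apply_apply]
  have e2 : (h.symm : Y → X) (compZ g n (h z)) = compZ f n z := by
    rw [← hcomm n z, Equiv.symm_apply_apply]
  rw [e1, e2] at h3
  exact h3.le
end

section
/- Let F = {fₙ} be a time varying uniform equivalence on a separable metric space such that {fₙ, fₙ⁻¹} is equicontinuous, and let μ be an outer regular Borel measure expansive with respect to F. Then F is aperiodic with respect to μ: every measurable set A such that all points of A are periodic with a common period m (i.e., F_{im+j}(x) = F_j(x) for all i ∈ ℤ, 0 ≤ j < m, x ∈ A) satisfies μ(A) = 0. -/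
open MeasureTheory Metric Set Filter

variable {X : Type*}

theorem aperiodic_of_expansive_outer_regular
    [MetricSpace X] [TopologicalSpace.SeparableSpace X] [MeasurableSpace X] [BorelSpace X]
    (f : ℕ → X ≃ X) (hf : BiMeasurable f)
    (hUC : ∀ n, UniformContinuous (f n)) (hUC' : ∀ n, UniformContinuous ((f n).symm : X → X))
    (hequi : ∀ ε > (0 : ℝ), ∃ δ > (0 : ℝ), ∀ n : ℕ, ∀ x y : X, dist x y < δ →
      dist (f n x) (f n y) < ε ∧ dist ((f n).symm x) ((f n).symm y) < ε)
    (μ : Measure X) [μ.OuterRegular]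
    (hexp : IsExpansiveMeasure μ f)
    (m : ℕ) (hm : 1 ≤ m) (A : Set X) (hA : MeasurableSet A)
    (hper : ∀ x ∈ A, ∀ i : ℤ, ∀ j : ℕ, j < m →
      compZ f (i * (m : ℤ) + (j : ℤ)) x = compZ f (j : ℤ) x) :
    μ A = 0 := by
  obtain ⟨δ, hδpos, hδ⟩ := hexp
  obtain ⟨s, hsc, hsd⟩ := TopologicalSpace.exists_countable_dense X
  have hm0 : (0:ℤ) < (m:ℤ) := by exact_mod_cast hm
  have key : ∀ x ∈ A, ∀ n : ℤ, compZ f n x = compZ f ((n % (m:ℤ)).toNat : ℤ) x := by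
    intro x hx n
    have h2 : 0 ≤ n % (m:ℤ) := Int.emod_nonneg n (by omega)
    have hj : (n % (m:ℤ)).toNat < m := by
      have h1 : n % (m:ℤ) < m := Int.emod_lt_of_pos n hm0
      omega
    have h := hper x hx (n / (m:ℤ)) _ hj
    rw [Int.toNat_of_nonneg h2] at h ⊢
    rw [← h]
    congr 1
    rw [mul_comm]
    exact (Int.mul_ediv_add_emod n (m:ℤ)).symm
  set T : Set (Fin m → X) := Set.pi Set.univ (fun _ => s) with hT
  have hTc : T.Countable := Set.countable_univ_pi (fun _ => hsc)
  set S : (Fin m → X) → Set X := fun t =>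
    {x | x ∈ A ∧ ∀ j : Fin m, dist (compZ f ((j : ℕ) : ℤ) x) (t j) < δ / 2} with hS
  have hcover : A ⊆ ⋃ t ∈ T, S t := by
    intro x hx
    have hex : ∀ j : Fin m, ∃ y ∈ s, dist (compZ f ((j : ℕ) : ℤ) x) y < δ / 2 :=
      fun j => hsd.exists_dist_lt _ (by linarith)
    choose t ht hdist using hex
    exact Set.mem_biUnion (fun j _ => ht j) ⟨hx, hdist⟩
  refine measure_mono_null hcover ?_
  rw [measure_biUnion_null_iff hTc]
  intro t _
  rcases (S t).eq_empty_or_nonempty with h | ⟨x₀, hx₀⟩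
  · simp [h]
  refine measure_mono_null ?_ (hδ x₀)
  intro y hy n
  have hj : (n % (m:ℤ)).toNat < m := by
    have h1 : n % (m:ℤ) < m := Int.emod_lt_of_pos n hm0
    have h2 : 0 ≤ n % (m:ℤ) := Int.emod_nonneg n (by omega)
    omega
  set j : Fin m := ⟨(n % (m:ℤ)).toNat, hj⟩
  rw [key x₀ hx₀.1 n, key y hy.1 n]
  calc dist (compZ f ((j : ℕ) : ℤ) x₀) (compZ f ((j : ℕ) : ℤ) y)
      ≤ dist (compZ f ((j : ℕ) : ℤ) x₀) (t j) + dist (compZ f ((j : ℕ) : ℤ) y) (t j) :=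
        dist_triangle_right _ _ _
    _ ≤ δ := by
        have := hx₀.2 j
        have := hy.2 j
        linarith
end

section
/- If F is a topologically stable time varying bi-measurable map on a metric space X, then every non-atomic Borel measure μ on X is topologically stable with respect to F. -/
open MeasureTheory Metric Set Filter

variable {X : Type*}

theorem nonatomic_topStable_of_topStable_map
    [MetricSpace X] [MeasurableSpace X] [BorelSpace X]
    (f : ℕ → X ≃ X) (hf : BiMeasurable f)
    (hstable : TopStableMap f)
    (μ : Measure X) [NullSingletonClass μ] :
    TopStableMeasure μ f := by
  intro ε hε
  obtain ⟨δ, hδ0, hδ1, hδ⟩ := hstable ε hε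
  refine ⟨δ, hδ0, hδ1, fun g hg hpg => ?_⟩
  obtain ⟨h, hcont, hh⟩ := hδ g hg hpg
  refine ⟨fun x => {h x}, fun x => isCompact_singleton, ?_, ?_, ?_, ?_, ?_, ?_⟩
  · intro x _ O hO hsub
    have hx : x ∈ h ⁻¹' O := hsub rfl
    obtain ⟨r, hr0, hball⟩ := Metric.isOpen_iff.1 (hO.preimage hcont) x hx
    refine ⟨r, hr0, fun y hy => ?_⟩
    rintro z rfl
    exact hball (by simpa [Metric.mem_ball, dist_comm] using hy)
  · have : {x : X | ({h x} : Set X).Nonempty} = Set.univ := by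
      ext x; simp
    rw [this]; exact MeasurableSet.univ
  · have : {x : X | ¬ ({h x} : Set X).Nonempty} = ∅ := by
      ext x; simp
    simp [this]
  · intro x; simp [measure_singleton]
  · intro x z hz
    rw [Set.mem_singleton_iff] at hz
    subst hz
    exact Metric.mem_ball.2 ((hh x).1)
  · intro x n z hz
    simp only [Set.image_singleton, Set.mem_singleton_iff] at hz
    subst hz
    exact Metric.mem_closedBall.2 (le_of_lt ((hh x).2 n))
end

section
/- Every uncountable complete separable metric space supporting a topologically stable time varying bi-measurable map admits a topologically stable Borel measure; equivalently, a complete separable metric space supporting a topologically stable bi-measurable map but no topologically stable measure must be countable. -/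
open MeasureTheory Metric Set Filter

variable {X : Type*}

theorem exists_topStable_measure_of_uncountable
    [MetricSpace X] [CompleteSpace X] [TopologicalSpace.SeparableSpace X]
    [MeasurableSpace X] [BorelSpace X]
    (hX : ¬ Countable X)
    (f : ℕ → X ≃ X) (hf : BiMeasurable f)
    (hstable : TopStableMap f) :
    ∃ μ : Measure X, IsProbabilityMeasure μ ∧ TopStableMeasure μ f := by
  -- X is a Polish space, hence a standard Borel space.
  haveI : PolishSpace X := inferInstance
  -- Borel isomorphism with ℝ
  have hR : ¬ Countable ℝ := fun h => Cardinal.not_countable_real (Set.countable_univ (α := ℝ) |>.mono (Set.subset_univ _))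
  let e : X ≃ᵐ ℝ := PolishSpace.measurableEquivOfNotCountable hX hR
  -- push forward the uniform measure on [0,1]
  let μ0 : Measure ℝ := volume.restrict (Set.Icc (0:ℝ) 1)
  let μ : Measure X := μ0.map e.symm
  have hmap : ∀ s : Set X, MeasurableSet s → μ s = μ0 (e.symm ⁻¹' s) := by
    intro s hs
    exact MeasureTheory.Measure.map_apply e.symm.measurable hs
  have hμsingleton : ∀ x : X, μ {x} = 0 := by
    intro x
    rw [hmap {x} (measurableSet_singleton x)]
    have : e.symm ⁻¹' ({x} : Set X) = {e x} := by
      ext r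
      simp only [Set.mem_preimage, Set.mem_singleton_iff]
      constructor
      · rintro rfl; simp
      · rintro rfl; simp
    rw [this]
    have := MeasureTheory.Measure.restrict_le_self (μ := (volume : Measure ℝ))
      (s := Set.Icc (0:ℝ) 1) ({e x} : Set ℝ)
    simp only [μ0] at this ⊢; exact le_antisymm (this.trans_eq (Real.volume_singleton)) zero_le
  refine ⟨μ, ⟨?_⟩, ?_⟩
  · rw [hmap Set.univ MeasurableSet.univ]
    simp [μ0, Real.volume_Icc]
  · intro ε hε
    obtain ⟨δ, hδ0, hδ1, hδ⟩ := hstable ε hε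
    refine ⟨δ, hδ0, hδ1, fun g hg hpg => ?_⟩
    obtain ⟨h, hcont, htr⟩ := hδ g hg hpg
    refine ⟨fun x => {h x}, fun x => isCompact_singleton, ?_, ?_, ?_, ?_, ?_, ?_⟩
    · intro x _ O hO hsub
      have hxO : x ∈ h ⁻¹' O := hsub rfl
      obtain ⟨r, hr0, hr⟩ := Metric.isOpen_iff.1 (hO.preimage hcont) x hxO
      refine ⟨r, hr0, fun y hy => ?_⟩
      intro z hz
      rw [Set.mem_singleton_iff] at hz
      subst hz
      exact hr (by simpa [Metric.mem_ball, dist_comm] using hy)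
    · have : {x : X | ({h x} : Set X).Nonempty} = Set.univ := by
        ext x; simp
      rw [this]; exact MeasurableSet.univ
    · have : {x : X | ¬ ({h x} : Set X).Nonempty} = ∅ := by
        ext x; simp
      rw [this]; exact measure_empty
    · intro x; exact hμsingleton (h x)
    · intro x z hz
      rw [Set.mem_singleton_iff] at hz; subst hz
      exact Metric.mem_ball.2 ((htr x).1)
    · intro x n z hz
      obtain ⟨w, hw, rfl⟩ := hz
      rw [Set.mem_singleton_iff] at hw; subst hw
      exact Metric.mem_closedBall.2 ((htr x).2 n).le
end

section
/- Let F be a time varying bi-measurable map on a metric space X and h : X → X a uniform equivalence. If a Borel measure μ is topologically stable with respect to F, then the measure h_*(μ) defined by h_*(μ)(A) = μ(h(A)) is topologically stable with respect to the conjugated system F' = {h⁻¹∘fₙ∘h}. -/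
open MeasureTheory Metric Set Filter

variable {X : Type*}

lemma eta_le_one' [PseudoMetricSpace X] (f g : X → X) : eta f g ≤ 1 :=
  Real.iSup_le (fun _ => min_le_right _ _) zero_le_one

lemma eta_le' [PseudoMetricSpace X] {f g : X → X} {c : ℝ} (hc : 0 ≤ c)
    (hfg : ∀ x, dist (f x) (g x) ≤ c) : eta f g ≤ c :=
  Real.iSup_le (fun x => le_trans (min_le_left _ _) (hfg x)) hc

lemma min_le_eta' [PseudoMetricSpace X] (f g : X → X) (x : X) :
    min (dist (f x) (g x)) 1 ≤ eta f g := by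
  refine le_ciSup (f := fun y => min (dist (f y) (g y)) 1) ⟨1, ?_⟩ x
  rintro r ⟨y, rfl⟩
  exact min_le_right _ _

lemma dist_lt_of_pDist_lt [PseudoMetricSpace X] {f g : ℕ → X ≃ X} {c : ℝ}
    (hc : c ≤ 1) (hp : pDist f g < c) (n : ℕ) (x : X) :
    dist (f n x) (g n x) < c ∧ dist ((f n).symm x) ((g n).symm x) < c := by
  have h1 : eta (f n) (g n) < c := by
    refine lt_of_le_of_lt ?_ (lt_of_le_of_lt (le_max_left _ _) hp)
    refine le_ciSup (f := fun m => eta ((f m) : X → X) ((g m) : X → X)) ⟨1, ?_⟩ n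
    rintro r ⟨m, rfl⟩
    exact eta_le_one' _ _
  have h2 : eta ((f n).symm) ((g n).symm) < c := by
    refine lt_of_le_of_lt ?_ (lt_of_le_of_lt (le_max_right _ _) hp)
    refine le_ciSup (f := fun m => eta (((f m).symm) : X → X) (((g m).symm) : X → X)) ⟨1, ?_⟩ n
    rintro r ⟨m, rfl⟩
    exact eta_le_one' _ _
  constructor
  · have := lt_of_le_of_lt (min_le_eta' (f n) (g n) x) h1
    rcases min_lt_iff.mp this with h | h
    · exact h
    · exact absurd (lt_of_lt_of_le h hc) (lt_irrefl 1)
  · have := lt_of_le_of_lt (min_le_eta' ((f n).symm : X → X) ((g n).symm) x) h2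
    rcases min_lt_iff.mp this with h | h
    · exact h
    · exact absurd (lt_of_lt_of_le h hc) (lt_irrefl 1)

lemma compF_conj (f : ℕ → X ≃ X) (e : X ≃ X) (k : ℕ) (x : X) :
    compF (fun m => (e.trans (f m)).trans e.symm) k x = e.symm (compF f k (e x)) := by
  induction k with
  | zero => rfl
  | succ k ih => simp [compF, ih, Equiv.apply_symm_apply]

lemma compB_conj (f : ℕ → X ≃ X) (e : X ≃ X) (k : ℕ) (x : X) :
    compB (fun m => (e.trans (f m)).trans e.symm) k x = e.symm (compB f k (e x)) := by
  induction k with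
  | zero => simp [compB]
  | succ k ih => simp [compB, ih, Equiv.apply_symm_apply]

lemma compZ_conj (f : ℕ → X ≃ X) (e : X ≃ X) (n : ℤ) (x : X) :
    compZ (fun m => (e.trans (f m)).trans e.symm) n x = e.symm (compZ f n (e x)) := by
  cases n with
  | ofNat k => exact compF_conj f e k x
  | negSucc k => exact compB_conj f e (k + 1) x

theorem topStable_measure_pushforward
    [MetricSpace X] [MeasurableSpace X] [BorelSpace X]
    (f : ℕ → X ≃ X) (hf : BiMeasurable f)
    (h : X ≃ X) (hUC : UniformContinuous (h : X → X))
    (hUC' : UniformContinuous (h.symm : X → X))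
    (μ : Measure X) (hst : TopStableMeasure μ f) :
    TopStableMeasure (Measure.map (h.symm : X → X) μ)
      (fun n => (h.trans (f n)).trans h.symm) := by
  intro ε hε
  obtain ⟨ε₁, hε₁, hε₁'⟩ := Metric.uniformContinuous_iff.mp hUC' ε hε
  set ε' : ℝ := ε₁ / 2 with hε'def
  have hε'pos : 0 < ε' := by positivity
  obtain ⟨δ', hδ'0, hδ'1, hδ'⟩ := hst ε' hε'pos
  obtain ⟨δ₁, hδ₁, hδ₁'⟩ := Metric.uniformContinuous_iff.mp hUC (δ' / 2) (by positivity)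
  refine ⟨min δ₁ (1 / 2), lt_min hδ₁ (by norm_num),
    lt_of_le_of_lt (min_le_right _ _) (by norm_num), ?_⟩
  intro g hg hpg
  set g' : ℕ → X ≃ X := fun n => ((h.symm).trans (g n)).trans (h.symm).symm with hg'def
  have hg'app : ∀ n y, (g' n) y = h (g n (h.symm y)) := by
    intro n y; simp [hg'def, Equiv.trans_apply]
  have hg'symm : ∀ n y, ((g' n).symm : X → X) y = h ((g n).symm (h.symm y)) := by
    intro n y; simp [hg'def, Equiv.symm_trans_apply]
  have hmh : Measurable (h : X → X) := hUC.continuous.measurable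
  have hmh' : Measurable (h.symm : X → X) := hUC'.continuous.measurable
  -- g' is bi-measurable
  have hg'bm : BiMeasurable g' := by
    refine ⟨fun n => ?_, fun n => ?_, ?_⟩
    · have : ((g' n : X → X)) = (h : X → X) ∘ (g n : X → X) ∘ (h.symm : X → X) := by
        funext y; simp [hg'app]
      rw [this]; exact hmh.comp ((hg.1 n).comp hmh')
    · have : (((g' n).symm : X → X)) = (h : X → X) ∘ ((g n).symm : X → X) ∘ (h.symm : X → X) := by
        funext y; simp [hg'symm]
      rw [this]; exact hmh.comp ((hg.2.1 n).comp hmh')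
    · ext y
      simp [hg'app, hg.2.2]
  -- pDist f g' < δ'
  have hpg' : pDist f g' < δ' := by
    have key : ∀ n (x : X), dist (f n x) (g' n x) ≤ δ' / 2 ∧
        dist ((f n).symm x) ((g' n).symm x) ≤ δ' / 2 := by
      intro n x
      have hd := dist_lt_of_pDist_lt (f := fun m => (h.trans (f m)).trans h.symm) (g := g)
        (c := min δ₁ (1 / 2)) (le_trans (min_le_right _ _) (by norm_num)) hpg n (h.symm x)
      have hd1 : dist (((h.trans (f n)).trans h.symm) (h.symm x)) (g n (h.symm x)) < δ₁ :=
        lt_of_lt_of_le hd.1 (min_le_left _ _)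
      have hd2 : dist ((((h.trans (f n)).trans h.symm).symm : X → X) (h.symm x))
          ((g n).symm (h.symm x)) < δ₁ := lt_of_lt_of_le hd.2 (min_le_left _ _)
      constructor
      · have := hδ₁' hd1
        have e1 : h (((h.trans (f n)).trans h.symm) (h.symm x)) = f n x := by
          simp [Equiv.trans_apply]
        rw [e1, ← hg'app] at this
        exact le_of_lt this
      · have := hδ₁' hd2
        have e1 : h ((((h.trans (f n)).trans h.symm).symm : X → X) (h.symm x))
            = (f n).symm x := by
          simp [Equiv.symm_trans_apply]
        rw [e1, ← hg'symm] at this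
        exact le_of_lt this
    have h1 : (⨆ n, eta (f n) ((g' n) : X → X)) ≤ δ' / 2 :=
      Real.iSup_le (fun n => eta_le' (by positivity) (fun x => (key n x).1)) (by positivity)
    have h2 : (⨆ n, eta ((f n).symm : X → X) ((g' n).symm : X → X)) ≤ δ' / 2 :=
      Real.iSup_le (fun n => eta_le' (by positivity) (fun x => (key n x).2)) (by positivity)
    calc pDist f g' ≤ δ' / 2 := max_le h1 h2
    _ < δ' := by linarith
  obtain ⟨H, hH1, hH2, hH3, hH4, hH5, hH6, hH7⟩ := hδ' g' hg'bm hpg'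
  -- the conjugated set-valued map
  set K : X → Set X := fun x => (h : X → X) ⁻¹' (H (h x)) with hKdef
  have hKim : ∀ x, K x = (h.symm : X → X) '' (H (h x)) := by
    intro x
    rw [Equiv.image_eq_preimage_symm]
    simp [hKdef]
  have hKne : ∀ x, (K x).Nonempty ↔ (H (h x)).Nonempty := by
    intro x
    rw [hKim]
    exact Set.image_nonempty
  have hKset : {x : X | (K x).Nonempty} = (h : X → X) ⁻¹' {y : X | (H y).Nonempty} := by
    ext x; simp [hKne]
  refine ⟨K, ?_, ?_, ?_, ?_, ?_, ?_, ?_⟩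
  · -- compactness
    intro x
    rw [hKim]
    exact (hH1 (h x)).image hUC'.continuous
  · -- USC
    intro x hne O hO hsub
    have hne' : (H (h x)).Nonempty := (hKne x).mp hne
    have hsub' : H (h x) ⊆ (h.symm : X → X) ⁻¹' O := by
      intro w hw
      have : h.symm w ∈ K x := by
        simp only [hKdef, Set.mem_preimage, Equiv.apply_symm_apply]
        exact hw
      exact hsub this
    obtain ⟨δ₂, hδ₂, hδ₂'⟩ := hH2 (h x) hne' _ (hO.preimage hUC'.continuous) hsub'
    obtain ⟨δ₃, hδ₃, hδ₃'⟩ := Metric.uniformContinuous_iff.mp hUC δ₂ hδ₂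
    refine ⟨δ₃, hδ₃, fun y hy z hz => ?_⟩
    have hmem : h z ∈ H (h y) := hz
    have := hδ₂' (h y) (hδ₃' hy) hmem
    simpa using this
  · -- measurability of domain
    rw [hKset]
    exact hmh hH3
  · -- null complement of domain
    have hset : {x : X | ¬ (K x).Nonempty} = (h : X → X) ⁻¹' {y : X | ¬ (H y).Nonempty} := by
      ext x; simp [hKne]
    have hmeas : MeasurableSet {x : X | ¬ (K x).Nonempty} := by
      rw [hset]
      exact hmh hH3.compl
    rw [Measure.map_apply hmh' hmeas, hset]
    have : (h.symm : X → X) ⁻¹' ((h : X → X) ⁻¹' {y : X | ¬ (H y).Nonempty})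
        = {y : X | ¬ (H y).Nonempty} := by
      ext y; simp
    rw [this]
    exact hH4
  · -- each image is null
    intro x
    have hmeas : MeasurableSet (K x) := by
      rw [hKim]
      exact (((hH1 (h x)).image hUC'.continuous).isClosed).measurableSet
    rw [Measure.map_apply hmh' hmeas]
    have : (h.symm : X → X) ⁻¹' (K x) = H (h x) := by
      ext y; simp [hKdef]
    rw [this]
    exact hH5 (h x)
  · -- K x ⊆ ball x ε
    intro x z hz
    have hw : h z ∈ H (h x) := hz
    have hd : dist (h z) (h x) < ε' := hH6 (h x) hw
    have hd' : dist (h z) (h x) < ε₁ := lt_of_lt_of_le hd (by rw [hε'def]; linarith)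
    have := hε₁' hd'
    simpa using this
  · -- shadowing property
    intro x n z hz
    obtain ⟨w, hw, rfl⟩ := hz
    have hmem : h w ∈ H (h x) := hw
    have himg : compZ f n (h w) ∈ compZ f n '' H (h x) := ⟨h w, hmem, rfl⟩
    have hd : dist (compZ f n (h w)) (compZ g' n (h x)) ≤ ε' :=
      mem_closedBall.mp (hH7 (h x) n himg)
    have hg'Z : compZ g' n (h x) = h (compZ g n x) := by
      have := compZ_conj g h.symm n (h x)
      simp only [hg'def] at this ⊢
      rw [this]
      simp
    rw [hg'Z] at hd
    have hd' : dist (compZ f n (h w)) (h (compZ g n x)) < ε₁ :=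
      lt_of_le_of_lt hd (by rw [hε'def]; linarith)
    have hfin := hε₁' hd'
    have hfZ : compZ (fun m => (h.trans (f m)).trans h.symm) n w
        = h.symm (compZ f n (h w)) := compZ_conj f h n w
    rw [mem_closedBall, hfZ]
    have : dist (h.symm (compZ f n (h w))) (h.symm (h (compZ g n x))) < ε := hfin
    simp only [Equiv.symm_apply_apply] at this
    exact le_of_lt this
end

section
/- Every Borel measure that is topologically stable with respect to an expansive time varying bi-measurable map is non-atomic. -/
open MeasureTheory Metric Set Filter

variable {X : Type*}

theorem topStable_measure_nonatomic_of_expansive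
    [MetricSpace X] [MeasurableSpace X] [BorelSpace X]
    (f : ℕ → X ≃ X) (hf : BiMeasurable f)
    (hexp : ∃ e > (0 : ℝ), ∀ x y : X, x ≠ y →
      ∃ n : ℤ, e < dist (compZ f n x) (compZ f n y))
    (μ : Measure X) (hst : TopStableMeasure μ f) :
    ∀ x : X, μ {x} = 0 := by
  obtain ⟨e, he, hsep⟩ := hexp
  obtain ⟨δ, hδ0, hδ1, hmain⟩ := hst e he
  have hpd : pDist f f < δ := by
    have heta : ∀ g : X → X, eta g g = 0 := by
      intro g
      simp [eta, dist_self]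
    have : pDist f f = 0 := by
      simp [pDist, heta]
    rw [this]; exact hδ0
  obtain ⟨H, _, _, _, hnull, hHnull, _, hsh⟩ := hmain f hf hpd
  intro x
  by_cases hx : (H x).Nonempty
  · -- H x = {x}
    have hsub : H x ⊆ {x} := by
      intro y hy
      by_contra hne
      obtain ⟨n, hn⟩ := hsep x y (fun h => hne (by simp [h]))
      have : compZ f n y ∈ closedBall (compZ f n x) e :=
        hsh x n ⟨y, hy, rfl⟩
      rw [mem_closedBall, dist_comm] at this
      exact absurd this (not_le.mpr hn)
    obtain ⟨y, hy⟩ := hx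
    have hyx : y = x := hsub hy
    have hxm : x ∈ H x := hyx ▸ hy
    exact measure_mono_null (singleton_subset_iff.mpr hxm) (hHnull x)
  · have : ({x} : Set X) ⊆ {z : X | ¬ (H z).Nonempty} := by
      intro z hz; rw [mem_singleton_iff] at hz; rw [hz]; exact hx
    exact measure_mono_null this hnull
end

section
/- Let X be a metric space in which all closed bounded sets are compact (relatively compact metric space), F a time varying bi-measurable map on X, and μ a Borel measure persistent with respect to F. If for the δ given by persistence there exists a time varying bi-measurable map G with p(F,G) < δ such that the set of transitive points of G (points x with ω(G,x) = X) has positive μ-measure, then the non-wandering set Ω(F) equals X. -/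
open MeasureTheory Metric Set Filter

variable {X : Type*}

lemma seg_compF (f : ℕ → X ≃ X) (a r : ℕ) (w : X) :
    seg f (a + 1) r (compF f a w) = compF f (a + r + 1) w := by
  induction r with
  | zero => rfl
  | succ r ih =>
      show f (a + 1 + r + 1) (seg f (a + 1) r (compF f a w)) = _
      rw [ih, show a + 1 + r + 1 = a + (r + 1) + 1 from by omega]
      rfl

lemma strictMono_int_growth {φ : ℕ → ℤ} (hφ : StrictMono φ) (k : ℕ) :
    φ 0 + k ≤ φ k := by
  induction k with
  | zero => simp
  | succ k ih =>
      have := hφ (show k < k + 1 by omega)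
      push_cast
      omega

theorem nonWandering_eq_univ_of_persistent_transitive_approx
    [MetricSpace X] [MeasurableSpace X] [BorelSpace X]
    (hcomp : ∀ (K : Set X) (ε : ℝ), IsCompact K → 0 < ε →
      IsCompact (Metric.cthickening ε K))
    (f : ℕ → X ≃ X) (hf : BiMeasurable f)
    (μ : Measure X) (hp : MeasurePersistent μ f)
    (happrox : ∀ δ > (0 : ℝ), ∃ g : ℕ → X ≃ X, BiMeasurable g ∧ pDist f g < δ ∧
      0 < μ {x | omegaLimitSet g x = Set.univ}) :
    NonWandering f = Set.univ := by
  rw [Set.eq_univ_iff_forall]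
  intro x U hU hxU n
  obtain ⟨ε, hε, hball⟩ := Metric.isOpen_iff.mp hU x hxU
  obtain ⟨δ, hδ0, hδ1, B, hBmeas, hBnull, htrace⟩ := hp (ε / 2) (by positivity)
  obtain ⟨g, hg, hpg, hT⟩ := happrox δ hδ0
  set T : Set X := {x | omegaLimitSet g x = Set.univ} with hTdef
  -- find a point in T ∩ B
  have hTB : (T ∩ B).Nonempty := by
    by_contra h
    rw [Set.not_nonempty_iff_eq_empty] at h
    have hsub : T ⊆ Set.univ \ B := by
      intro t ht
      refine ⟨trivial, fun htB => ?_⟩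
      exact Set.eq_empty_iff_forall_notMem.mp h t ⟨ht, htB⟩
    have := measure_mono (μ := μ) hsub
    rw [hBnull] at this
    exact absurd (le_antisymm this zero_le) (ne_of_gt hT)
  obtain ⟨z, hzT, hzB⟩ := hTB
  obtain ⟨y, hy⟩ := htrace g hg hpg z hzB
  -- x is in the omega limit set of z under g
  have hxω : x ∈ omegaLimitSet g z := by rw [hzT]; trivial
  obtain ⟨φ, hφ, hlim⟩ := hxω
  have hev : ∀ᶠ k in Filter.atTop, dist (compZ g (φ k) z) x < ε / 2 :=
    hlim.eventually (gt_mem_nhds (by positivity))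
  obtain ⟨K, hK⟩ := Filter.eventually_atTop.mp hev
  set k₁ : ℕ := max K (n + (φ 0).natAbs) with hk₁def
  set k₂ : ℕ := k₁ + 1 with hk₂def
  have hφn : ∀ k, k₁ ≤ k → (n : ℤ) ≤ φ k := by
    intro k hk
    have h1 := strictMono_int_growth hφ k
    have h2 : (n : ℤ) + (φ 0).natAbs ≤ k := by
      have : n + (φ 0).natAbs ≤ k := le_trans (le_max_right _ _) hk
      exact_mod_cast this
    have h3 : (0 : ℤ) ≤ φ 0 + (φ 0).natAbs := by
      have := Int.natAbs_eq (φ 0); omega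
    omega
  have ha0 : (0 : ℤ) ≤ φ k₁ := le_trans (Int.ofNat_nonneg n) (hφn k₁ le_rfl)
  have hb0 : (0 : ℤ) ≤ φ k₂ := le_trans (Int.ofNat_nonneg n) (hφn k₂ (by omega))
  set a : ℕ := (φ k₁).toNat with hadef
  set b : ℕ := (φ k₂).toNat with hbdef
  have ha : (a : ℤ) = φ k₁ := Int.toNat_of_nonneg ha0
  have hb : (b : ℤ) = φ k₂ := Int.toNat_of_nonneg hb0
  have hab : a < b := by
    have := hφ (show k₁ < k₂ by omega)
    omega
  have han : n ≤ a := by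
    have := hφn k₁ le_rfl
    omega
  -- the two points in U
  have hmem : ∀ k : ℕ, k₁ ≤ k → (0:ℤ) ≤ φ k → compF f (φ k).toNat y ∈ U := by
    intro k hk hk0
    apply hball
    have h1 : dist (compZ f (φ k) y) (compZ g (φ k) z) < ε / 2 := hy (φ k)
    have h2 : dist (compZ g (φ k) z) x < ε / 2 := hK k (le_trans (le_max_left _ _) hk)
    have hcz : compZ f (φ k) y = compF f (φ k).toNat y := by
      rw [show φ k = ((φ k).toNat : ℤ) from (Int.toNat_of_nonneg hk0).symm]
      rfl
    rw [hcz] at h1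
    calc dist (compF f (φ k).toNat y) x
        ≤ dist (compF f (φ k).toNat y) (compZ g (φ k) z) + dist (compZ g (φ k) z) x :=
          dist_triangle _ _ _
      _ < ε / 2 + ε / 2 := add_lt_add h1 h2
      _ = ε := by ring
  have hu₁ : compF f a y ∈ U := hmem k₁ le_rfl ha0
  have hu₂ : compF f b y ∈ U := hmem k₂ (by omega) hb0
  refine ⟨a + 1, by omega, b - a - 1, Or.inl ⟨compF f b y, ⟨compF f a y, hu₁, ?_⟩, hu₂⟩⟩
  have hseg := seg_compF f a (b - a - 1) y
  rwa [show a + (b - a - 1) + 1 = b from by omega] at hseg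
end
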